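/- arXiv:2510.05669 — 2 statements merged into one kernel-verified Lean document; each statement's English description precedes it below -/
import Mathlib

section
/- Let α = [o, ξ) be a geodesic ray in a proper CAT(0) space X ending at a boundary point ξ ∈ ∂_∞X. Suppose there is C > 0 and a sequence of C-contracting geodesic segments p_n such that N_C(p_n) ∩ α leaves every compact set and has diameter at least 8C for every n. Then for every boundary point η ∈ ∂_∞X with η ≠ ξ there exists a bi-infinite geodesic in X with endpoints ξ and η. -/
open scoped NNReal

/-- A map `γ : ℝ → X` is a (unit-speed) geodesic on the interval `[a, b]`. -/
def IsGeodesicOn {X : Type*} [MetricSpace X] (γ : ℝ → X) (a b : ℝ) : Prop :=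
  ∀ s ∈ Set.Icc a b, ∀ t ∈ Set.Icc a b, dist (γ s) (γ t) = |s - t|

/-- `X` is a CAT(0) space: geodesic and satisfying the CN comparison inequality. -/
def IsCAT0 (X : Type*) [MetricSpace X] : Prop :=
  (∀ x y : X, ∃ γ : ℝ → X, IsGeodesicOn γ 0 (dist x y) ∧ γ 0 = x ∧ γ (dist x y) = y) ∧
  (∀ (γ : ℝ → X) (a b : ℝ), a ≤ b → IsGeodesicOn γ a b → ∀ x : X, ∀ t ∈ Set.Icc (0 : ℝ) 1,
    dist x (γ (a + t * (b - a))) ^ 2 ≤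
      (1 - t) * dist x (γ a) ^ 2 + t * dist x (γ b) ^ 2 - t * (1 - t) * dist (γ a) (γ b) ^ 2)

/-- The set of nearest-point projections of `x` to `U`. -/
noncomputable def ProjSet {X : Type*} [MetricSpace X] (U : Set X) (x : X) : Set X :=
  {y ∈ U | dist x y = Metric.infDist x U}

/-- `U` is `C`-contracting: every geodesic at distance `≥ C` from `U`
projects to a subset of `U` of diameter `≤ C`. -/
def IsContractingSet {X : Type*} [MetricSpace X] (U : Set X) (C : ℝ) : Prop :=
  ∀ (γ : ℝ → X) (a b : ℝ), a ≤ b → IsGeodesicOn γ a b →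
    (∀ t ∈ Set.Icc a b, C ≤ Metric.infDist (γ t) U) →
    Metric.diam (⋃ t ∈ Set.Icc a b, ProjSet U (γ t)) ≤ C


/-!
Let `l ≤ u` be the first and last times at which `α` is `C`-close to a contracting segment `P`.
Contraction puts the projection to `P` of `α m`, for `m > u`, near `α u`, and that of the base
point near `α l`. If for some `P` the projections of `α m` and `β m` are more than `C` apart for
all large `m`, the geodesics from `β m` to `α m` all pass within `4C` of `α u`; by properness they
subconverge to a bi-infinite geodesic, which stays close to `α` and to `β` by convexity of the
CAT(0) metric. Otherwise, for every `P` some such pair of projections is `C`-close, so `β` passes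
within `2C` of the projection of the base point, hence within `4C` of `α l`; convexity keeps `α`
and `β` within `8C` of each other up to time `l - 4C`, and `l → ∞` contradicts `ξ ≠ η`.
-/

open Metric Filter Set Topology

section

variable {X : Type*} [MetricSpace X]

namespace IsGeodesicOn

variable {γ : ℝ → X} {a b : ℝ}

theorem mono (h : IsGeodesicOn γ a b) {c d : ℝ} (hc : a ≤ c) (hd : d ≤ b) :
    IsGeodesicOn γ c d :=
  fun s hs t ht => h s ⟨hc.trans hs.1, hs.2.trans hd⟩ t ⟨hc.trans ht.1, ht.2.trans hd⟩

theorem comp_const_add (h : IsGeodesicOn γ a b) {c a' b' : ℝ} (ha : a ≤ c + a')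
    (hb : c + b' ≤ b) : IsGeodesicOn (fun v => γ (c + v)) a' b' := by
  intro s hs t ht
  rw [h (c + s) ⟨by linarith [hs.1], by linarith [hs.2]⟩ (c + t)
    ⟨by linarith [ht.1], by linarith [ht.2]⟩, add_sub_add_left_eq_sub]

theorem comp_const_sub (h : IsGeodesicOn γ a b) {c a' b' : ℝ} (ha : a ≤ c - b')
    (hb : c - a' ≤ b) : IsGeodesicOn (fun v => γ (c - v)) a' b' := by
  intro s hs t ht
  rw [h (c - s) ⟨by linarith [hs.2], by linarith [hs.1]⟩ (c - t)
    ⟨by linarith [ht.2], by linarith [ht.1]⟩, sub_sub_sub_cancel_left, abs_sub_comm]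

theorem dist_eq (h : IsGeodesicOn γ a b) {s t : ℝ} (hs : s ∈ Icc a b) (ht : t ∈ Icc a b)
    (hst : s ≤ t) : dist (γ s) (γ t) = t - s := by
  rw [h s hs t ht, abs_sub_comm, abs_of_nonneg (sub_nonneg.2 hst)]

theorem continuousOn (h : IsGeodesicOn γ a b) : ContinuousOn γ (Icc a b) :=
  (LipschitzOnWith.of_dist_le_mul (K := 1) fun s hs t ht => by
    simp [h s hs t ht, Real.dist_eq]).continuousOn

theorem isCompact_image (h : IsGeodesicOn γ a b) : IsCompact (γ '' Icc a b) :=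
  isCompact_Icc.image_of_continuousOn h.continuousOn

end IsGeodesicOn

def IsGeodesicRay (A : ℝ → X) : Prop :=
  ∀ b, IsGeodesicOn A 0 b

theorem Isometry.isGeodesicRay_comp_toNNReal {α : ℝ≥0 → X} (hα : Isometry α) :
    IsGeodesicRay fun t => α t.toNNReal := fun _ s hs t ht => by
  rw [hα.dist_eq, NNReal.dist_eq, Real.coe_toNNReal s hs.1, Real.coe_toNNReal t ht.1]

namespace IsGeodesicRay

variable {A : ℝ → X}

theorem isGeodesicOn (hA : IsGeodesicRay A) {a : ℝ} (ha : 0 ≤ a) (b : ℝ) :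
    IsGeodesicOn A a b :=
  (hA b).mono ha le_rfl

theorem dist_eq (hA : IsGeodesicRay A) {s t : ℝ} (hs : 0 ≤ s) (hst : s ≤ t) :
    dist (A s) (A t) = t - s :=
  (hA t).dist_eq ⟨hs, hst⟩ ⟨hs.trans hst, le_rfl⟩ hst

theorem dist_eq_abs (hA : IsGeodesicRay A) {s t : ℝ} (hs : 0 ≤ s) (ht : 0 ≤ t) :
    dist (A s) (A t) = |s - t| :=
  hA (max s t) s ⟨hs, le_max_left s t⟩ t ⟨ht, le_max_right s t⟩

theorem continuousOn (hA : IsGeodesicRay A) : ContinuousOn A (Ici 0) :=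
  (LipschitzOnWith.of_dist_le_mul (K := 1) fun s (hs : 0 ≤ s) t (ht : 0 ≤ t) => by
    simp [hA.dist_eq_abs hs ht, Real.dist_eq]).continuousOn

end IsGeodesicRay

namespace IsCAT0

variable {γ₁ γ₂ : ℝ → X} {L₁ L₂ t : ℝ}

theorem dist_le_mul_of_apply_zero_eq (hX : IsCAT0 X) (h₁ : IsGeodesicOn γ₁ 0 L₁)
    (h₂ : IsGeodesicOn γ₂ 0 L₂) (hL₁ : 0 ≤ L₁) (hL₂ : 0 ≤ L₂) (h0 : γ₁ 0 = γ₂ 0)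
    (ht : t ∈ Icc (0 : ℝ) 1) :
    dist (γ₁ (t * L₁)) (γ₂ (t * L₂)) ≤ t * dist (γ₁ L₁) (γ₂ L₂) := by
  have htL₁ : t * L₁ ∈ Icc 0 L₁ := ⟨mul_nonneg ht.1 hL₁, mul_le_of_le_one_left hL₁ ht.2⟩
  have e₁ : dist (γ₁ (t * L₁)) (γ₁ 0) = t * L₁ := by
    rw [dist_comm, h₁.dist_eq (left_mem_Icc.2 hL₁) htL₁ htL₁.1, sub_zero]
  have e₂ : dist (γ₁ 0) (γ₁ L₁) = L₁ := by
    rw [h₁.dist_eq (left_mem_Icc.2 hL₁) (right_mem_Icc.2 hL₁) hL₁, sub_zero]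
  have e₃ : dist (γ₁ 0) (γ₂ L₂) = L₂ := by
    rw [h0, h₂.dist_eq (left_mem_Icc.2 hL₂) (right_mem_Icc.2 hL₂) hL₂, sub_zero]
  have cn₂ := hX.2 γ₂ 0 L₂ hL₂ h₂ (γ₁ (t * L₁)) t ht
  have cn₁ := hX.2 γ₁ 0 L₁ hL₁ h₁ (γ₂ L₂) t ht
  simp only [zero_add, sub_zero, ← h0] at cn₁ cn₂
  rw [e₁, e₃] at cn₂
  rw [dist_comm (γ₂ L₂) (γ₁ 0), e₃, e₂, dist_comm (γ₂ L₂), dist_comm (γ₂ L₂)] at cn₁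
  have hsq : dist (γ₁ (t * L₁)) (γ₂ (t * L₂)) ^ 2 ≤ (t * dist (γ₁ L₁) (γ₂ L₂)) ^ 2 := by
    nlinarith [mul_le_mul_of_nonneg_left cn₁ ht.1]
  exact (pow_le_pow_iff_left₀ dist_nonneg (mul_nonneg ht.1 dist_nonneg) two_ne_zero).1 hsq

theorem dist_le_convex (hX : IsCAT0 X) (h₁ : IsGeodesicOn γ₁ 0 L₁)
    (h₂ : IsGeodesicOn γ₂ 0 L₂) (hL₁ : 0 ≤ L₁) (hL₂ : 0 ≤ L₂) (ht : t ∈ Icc (0 : ℝ) 1) :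
    dist (γ₁ (t * L₁)) (γ₂ (t * L₂)) ≤
      (1 - t) * dist (γ₁ 0) (γ₂ 0) + t * dist (γ₁ L₁) (γ₂ L₂) := by
  obtain ⟨δ, hδ, hδ0, hδD⟩ := hX.1 (γ₁ 0) (γ₂ L₂)
  set D := dist (γ₁ 0) (γ₂ L₂)
  have hD : 0 ≤ D := dist_nonneg
  have h₁δ : dist (γ₁ (t * L₁)) (δ (t * D)) ≤ t * dist (γ₁ L₁) (γ₂ L₂) := by
    simpa only [hδD] using hX.dist_le_mul_of_apply_zero_eq h₁ hδ hL₁ hD hδ0.symm ht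
  have hδ' : IsGeodesicOn (fun v => δ (D - v)) 0 D := hδ.comp_const_sub (by simp) (by simp)
  have h₂' : IsGeodesicOn (fun v => γ₂ (L₂ - v)) 0 L₂ := h₂.comp_const_sub (by simp) (by simp)
  have hδ₂ : dist (δ (t * D)) (γ₂ (t * L₂)) ≤ (1 - t) * dist (γ₁ 0) (γ₂ 0) := by
    have := hX.dist_le_mul_of_apply_zero_eq hδ' h₂' hD hL₂ (by simp [hδD])
      ⟨sub_nonneg.2 ht.2, sub_le_self 1 ht.1⟩
    simpa only [← one_sub_mul, sub_sub_cancel, sub_self, hδ0, dist_comm (γ₁ 0)] using this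
  calc dist (γ₁ (t * L₁)) (γ₂ (t * L₂))
      ≤ dist (γ₁ (t * L₁)) (δ (t * D)) + dist (δ (t * D)) (γ₂ (t * L₂)) := dist_triangle _ _ _
    _ ≤ (1 - t) * dist (γ₁ 0) (γ₂ 0) + t * dist (γ₁ L₁) (γ₂ L₂) := by linarith

theorem dist_le_of_isGeodesicOn (hX : IsCAT0 X) (h₁ : IsGeodesicOn γ₁ 0 L₁)
    (h₂ : IsGeodesicOn γ₂ 0 L₂) (ht : 0 ≤ t) (ht₁ : t ≤ L₁) (ht₂ : t ≤ L₂) :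
    dist (γ₁ t) (γ₂ t) ≤ dist (γ₁ 0) (γ₂ 0) + 2 * dist (γ₁ L₁) (γ₂ L₂) := by
  set d₀ := dist (γ₁ 0) (γ₂ 0)
  set d₁ := dist (γ₁ L₁) (γ₂ L₂)
  rcases ht.eq_or_lt with rfl | htpos
  · linarith [dist_nonneg (x := γ₁ L₁) (y := γ₂ L₂)]
  have hL₁ : 0 < L₁ := htpos.trans_le ht₁
  set τ := t / L₁
  have hτ : τ ∈ Icc (0 : ℝ) 1 := ⟨div_nonneg ht hL₁.le, div_le_one_of_le₀ ht₁ hL₁.le⟩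
  have hτL₁ : τ * L₁ = t := div_mul_cancel₀ t hL₁.ne'
  have hconv := hX.dist_le_convex h₁ h₂ hL₁.le (ht.trans ht₂) hτ
  rw [hτL₁] at hconv
  have hlen : |L₂ - L₁| ≤ d₀ + d₁ := by
    have e₁ := h₁.dist_eq (left_mem_Icc.2 hL₁.le) (right_mem_Icc.2 hL₁.le) hL₁.le
    have e₂ := h₂.dist_eq (left_mem_Icc.2 (ht.trans ht₂)) (right_mem_Icc.2 (ht.trans ht₂))
      (ht.trans ht₂)
    rw [sub_zero] at e₁ e₂
    rw [abs_le]
    constructor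
    · linarith [dist_triangle4 (γ₁ 0) (γ₂ 0) (γ₂ L₂) (γ₁ L₁), dist_comm (γ₂ L₂) (γ₁ L₁)]
    · linarith [dist_triangle4 (γ₂ 0) (γ₁ 0) (γ₁ L₁) (γ₂ L₂), dist_comm (γ₂ 0) (γ₁ 0)]
  have hshift : dist (γ₂ (τ * L₂)) (γ₂ t) ≤ τ * (d₀ + d₁) := by
    have hsub : τ * L₂ - t = τ * (L₂ - L₁) := by rw [mul_sub, hτL₁]
    rw [h₂ _ ⟨mul_nonneg hτ.1 (ht.trans ht₂), mul_le_of_le_one_left (ht.trans ht₂) hτ.2⟩ _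
      ⟨ht, ht₂⟩, hsub, abs_mul, abs_of_nonneg hτ.1]
    exact mul_le_mul_of_nonneg_left hlen hτ.1
  calc dist (γ₁ t) (γ₂ t) ≤ dist (γ₁ t) (γ₂ (τ * L₂)) + dist (γ₂ (τ * L₂)) (γ₂ t) :=
        dist_triangle _ _ _
    _ ≤ (1 - τ) * d₀ + τ * d₁ + τ * (d₀ + d₁) := add_le_add hconv hshift
    _ ≤ d₀ + 2 * d₁ := by nlinarith [mul_le_mul_of_nonneg_right hτ.2 (dist_nonneg : 0 ≤ d₁)]

end IsCAT0

theorem IsCompact.nonempty_projSet {P : Set X} (hPc : IsCompact P) (hPne : P.Nonempty) (x : X) :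
    (ProjSet P x).Nonempty :=
  let ⟨y, hy, hxy⟩ := hPc.exists_infDist_eq_dist hPne x
  ⟨y, hy, hxy.symm⟩

namespace IsContractingSet

variable {P : Set X} {C : ℝ} {σ : ℝ → X} {a b s t : ℝ} {p q : X}

theorem dist_le_of_mem_projSet (hP : IsContractingSet P C) (hPb : Bornology.IsBounded P)
    (hσ : IsGeodesicOn σ a b) (hfar : ∀ r ∈ Icc a b, C ≤ infDist (σ r) P)
    (hs : s ∈ Icc a b) (ht : t ∈ Icc a b) (hp : p ∈ ProjSet P (σ s))
    (hq : q ∈ ProjSet P (σ t)) : dist p q ≤ C :=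
  (dist_le_diam_of_mem (hPb.subset (iUnion₂_subset fun _ _ _ hy => hy.1))
    (mem_iUnion₂.2 ⟨s, hs, hp⟩) (mem_iUnion₂.2 ⟨t, ht, hq⟩)).trans
    (hP σ a b (hs.1.trans hs.2) hσ hfar)

theorem dist_le_two_mul (hP : IsContractingSet P C) (hPc : IsCompact P) (hPne : P.Nonempty)
    (hσ : IsGeodesicOn σ a b) (hfar : ∀ r ∈ Icc a b, C ≤ infDist (σ r) P)
    (hs : s ∈ Icc a b) (ht : t ∈ Icc a b) (hnear : infDist (σ s) P ≤ C)
    (hq : q ∈ ProjSet P (σ t)) : dist (σ s) q ≤ 2 * C := by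
  obtain ⟨p, hp⟩ := hPc.nonempty_projSet hPne (σ s)
  calc dist (σ s) q ≤ dist (σ s) p + dist p q := dist_triangle _ _ _
    _ ≤ C + C := add_le_add (hp.2 ▸ hnear)
        (hP.dist_le_of_mem_projSet hPc.isBounded hσ hfar hs ht hp hq)
    _ = 2 * C := by ring

theorem exists_dist_le_two_mul_of_lt_dist (hP : IsContractingSet P C) (hPc : IsCompact P)
    (hPne : P.Nonempty) (hσ : IsGeodesicOn σ a b) (hab : a ≤ b) (hp : p ∈ ProjSet P (σ a))
    (hq : q ∈ ProjSet P (σ b)) (hpq : C < dist p q) : ∃ s ∈ Icc a b, dist (σ s) p ≤ 2 * C := by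
  set f : ℝ → ℝ := fun r => infDist (σ r) P
  have hf : ContinuousOn f (Icc a b) :=
    (continuous_infDist_pt P).comp_continuousOn hσ.continuousOn
  have hS : IsCompact {r ∈ Icc a b | f r ≤ C} :=
    isCompact_Icc.of_isClosed_subset
      (hf.preimage_isClosed_of_isClosed isClosed_Icc isClosed_Iic) (sep_subset _ _)
  have hSne : {r ∈ Icc a b | f r ≤ C}.Nonempty := by
    by_contra hempty
    have hfar : ∀ r ∈ Icc a b, C ≤ f r := fun r hr => le_of_not_ge fun h => hempty ⟨r, hr, h⟩
    exact hpq.not_ge (hP.dist_le_of_mem_projSet hPc.isBounded hσ hfar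
      (left_mem_Icc.2 hab) (right_mem_Icc.2 hab) hp hq)
  -- `s₀` is the first time `σ` enters the closed `C`-neighbourhood of `P`
  obtain ⟨s₀, ⟨hs₀, hnear⟩, hfirst⟩ := hS.exists_isLeast hSne
  refine ⟨s₀, hs₀, ?_⟩
  rcases hs₀.1.eq_or_lt with has₀ | has₀
  · rw [← has₀] at hnear ⊢
    linarith [hp.2, infDist_nonneg (x := σ a) (s := P)]
  have hfar : ∀ r ∈ Icc a s₀, C ≤ f r := by
    rw [← closure_Ico has₀.ne]
    refine le_on_closure (fun r hr => le_of_not_ge fun h => ?_) continuousOn_const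
      (hf.mono (closure_Ico has₀.ne ▸ Icc_subset_Icc_right hs₀.2))
    exact hr.2.not_ge (hfirst ⟨⟨hr.1, hr.2.le.trans hs₀.2⟩, h⟩)
  exact hP.dist_le_two_mul hPc hPne (hσ.mono le_rfl hs₀.2) hfar (right_mem_Icc.2 has₀.le)
    (left_mem_Icc.2 has₀.le) hnear hp

end IsContractingSet

def nearTimes (A : ℝ → X) (P : Set X) (C : ℝ) : Set ℝ :=
  {t | 0 ≤ t ∧ infDist (A t) P ≤ C}

namespace IsGeodesicRay

variable {A : ℝ → X} {P : Set X} {C l u m : ℝ} {p : X}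

theorem isCompact_nearTimes (hA : IsGeodesicRay A) (hPb : Bornology.IsBounded P)
    (hPne : P.Nonempty) : IsCompact (nearTimes A P C) := by
  obtain ⟨y, hy⟩ := hPne
  refine isCompact_of_isClosed_isBounded ?_
    ((isBounded_Icc 0 (dist (A 0) y + (C + diam P))).subset fun t ht => ⟨ht.1, ?_⟩)
  · exact ((continuous_infDist_pt P).comp_continuousOn hA.continuousOn)
      |>.preimage_isClosed_of_isClosed isClosed_Ici isClosed_Iic
  · calc t = dist (A 0) (A t) := by rw [hA.dist_eq le_rfl ht.1, sub_zero]
      _ ≤ dist (A 0) y + dist y (A t) := dist_triangle _ _ _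
      _ ≤ dist (A 0) y + (C + diam P) := by
          rw [dist_comm y]
          linarith [dist_le_infDist_add_diam (x := A t) hPb hy, ht.2]

theorem exists_isLeast_isGreatest_nearTimes (hA : IsGeodesicRay A) (hPb : Bornology.IsBounded P)
    (hPne : P.Nonempty) {D : ℝ} (hD : 0 < D) (hdiam : D ≤ diam (A '' nearTimes A P C)) :
    ∃ l u, IsLeast (nearTimes A P C) l ∧ IsGreatest (nearTimes A P C) u ∧ l + D ≤ u := by
  have hT := hA.isCompact_nearTimes (C := C) hPb hPne
  have hTne : (nearTimes A P C).Nonempty := by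
    rw [nonempty_iff_ne_empty]
    rintro hempty
    rw [hempty, image_empty, diam_empty] at hdiam
    linarith
  obtain ⟨l, hl⟩ := hT.exists_isLeast hTne
  obtain ⟨u, hu⟩ := hT.exists_isGreatest hTne
  have hdiam_le : diam (A '' nearTimes A P C) ≤ u - l := by
    refine diam_le_of_forall_dist_le (sub_nonneg.2 (hl.2 hu.1)) ?_
    rintro _ ⟨s, hs, rfl⟩ _ ⟨t, ht, rfl⟩
    rw [hA.dist_eq_abs hs.1 ht.1, abs_sub_le_iff]
    constructor <;> linarith [hl.2 hs, hl.2 ht, hu.2 hs, hu.2 ht]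
  exact ⟨l, u, hl, hu, by linarith⟩

theorem le_infDist_of_isGreatest (hA : IsGeodesicRay A) (hu : IsGreatest (nearTimes A P C) u)
    (hum : u < m) : ∀ t ∈ Icc u m, C ≤ infDist (A t) P := by
  rw [← closure_Ioc hum.ne]
  refine le_on_closure
    (fun t ht => le_of_not_ge fun h => ht.1.not_ge (hu.2 ⟨hu.1.1.trans ht.1.le, h⟩))
    continuousOn_const ?_
  rw [closure_Ioc hum.ne]
  exact (continuous_infDist_pt P).comp_continuousOn (hA.isGeodesicOn hu.1.1 m).continuousOn

theorem le_infDist_of_isLeast (hA : IsGeodesicRay A) (hl : IsLeast (nearTimes A P C) l)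
    (hl0 : 0 < l) : ∀ t ∈ Icc 0 l, C ≤ infDist (A t) P := by
  rw [← closure_Ico hl0.ne]
  refine le_on_closure (fun t ht => le_of_not_ge fun h => ht.2.not_ge (hl.2 ⟨ht.1, h⟩))
    continuousOn_const ?_
  rw [closure_Ico hl0.ne]
  exact (continuous_infDist_pt P).comp_continuousOn (hA l).continuousOn

theorem dist_projSet_le_of_isGreatest (hA : IsGeodesicRay A) (hP : IsContractingSet P C)
    (hPc : IsCompact P) (hPne : P.Nonempty) (hu : IsGreatest (nearTimes A P C) u) (hum : u < m)
    (hp : p ∈ ProjSet P (A m)) : dist (A u) p ≤ 2 * C :=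
  hP.dist_le_two_mul hPc hPne (hA.isGeodesicOn hu.1.1 m) (hA.le_infDist_of_isGreatest hu hum)
    (left_mem_Icc.2 hum.le) (right_mem_Icc.2 hum.le) hu.1.2 hp

theorem dist_projSet_le_of_isLeast (hA : IsGeodesicRay A) (hP : IsContractingSet P C)
    (hPc : IsCompact P) (hPne : P.Nonempty) (hl : IsLeast (nearTimes A P C) l) (hl0 : 0 < l)
    (hp : p ∈ ProjSet P (A 0)) : dist (A l) p ≤ 2 * C :=
  hP.dist_le_two_mul hPc hPne (hA l) (hA.le_infDist_of_isLeast hl hl0) (right_mem_Icc.2 hl0.le)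
    (left_mem_Icc.2 hl0.le) hl.1.2 hp

theorem sub_le_dist (hA : IsGeodesicRay A) {a b R : ℝ} {x : X} (ha : 0 ≤ a) (hab : a ≤ b)
    (hx : dist x (A a) ≤ R) : b - (a + R) ≤ dist x (A b) := by
  linarith [hA.dist_eq ha hab, dist_triangle (A a) x (A b), dist_comm x (A a)]

end IsGeodesicRay

theorem exists_isometry_of_isGeodesicOn [ProperSpace X] {g : ℕ → ℝ → X} {L s : ℕ → ℝ}
    (hg : ∀ k, IsGeodesicOn (g k) 0 (L k)) {z : X} {R : ℝ} (hz : ∀ k, dist (g k (s k)) z ≤ R)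
    (hs : Tendsto s atTop atTop) (hLs : Tendsto (fun k => L k - s k) atTop atTop) :
    ∃ γ : ℝ → X, Isometry γ ∧
      ∀ t y D, (∀ᶠ k in atTop, dist (g k (s k + t)) y ≤ D) → dist (γ t) y ≤ D := by
  -- limits along an ultrafilter finer than `atTop` replace Arzelà–Ascoli's diagonal subsequence
  let F := Ultrafilter.of (atTop : Filter ℕ)
  have hF : (F : Filter ℕ) ≤ atTop := Ultrafilter.of_le _
  have hmem : ∀ t, ∀ᶠ k in atTop, s k + t ∈ Icc 0 (L k) ∧ s k ∈ Icc 0 (L k) := fun t => by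
    filter_upwards [hs.eventually_ge_atTop (max (-t) 0), hLs.eventually_ge_atTop (max t 0)]
      with k h₁ h₂
    obtain ⟨h₁t, h₁0⟩ := max_le_iff.1 h₁
    obtain ⟨h₂t, h₂0⟩ := max_le_iff.1 h₂
    exact ⟨⟨by linarith, by linarith⟩, ⟨h₁0, by linarith⟩⟩
  have hdist : ∀ t t', ∀ᶠ k in atTop, dist (g k (s k + t)) (g k (s k + t')) = |t - t'| :=
    fun t t' => by
      filter_upwards [hmem t, hmem t'] with k h h'
      rw [hg k _ h.1 _ h'.1, add_sub_add_left_eq_sub]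
  have hlim : ∀ t, ∃ x, Tendsto (fun k => g k (s k + t)) F (𝓝 x) := fun t => by
    have hball : ∀ᶠ k in atTop, g k (s k + t) ∈ closedBall z (|t| + R) := by
      filter_upwards [hmem t] with k h
      rw [mem_closedBall]
      calc dist (g k (s k + t)) z ≤ dist (g k (s k + t)) (g k (s k)) + dist (g k (s k)) z :=
            dist_triangle _ _ _
        _ ≤ |t| + R := by rw [hg k _ h.1 _ h.2, add_sub_cancel_left]; linarith [hz k]
    obtain ⟨x, -, hx⟩ := (isCompact_closedBall z (|t| + R)).ultrafilter_le_nhds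
      (F.map fun k => g k (s k + t)) (by rw [Ultrafilter.coe_map, le_principal_iff]; exact hF hball)
    exact ⟨x, by rwa [Ultrafilter.coe_map] at hx⟩
  choose γ hγ using hlim
  refine ⟨γ, Isometry.of_dist_eq fun t t' => ?_, fun t y D h =>
    le_of_tendsto ((hγ t).dist tendsto_const_nhds) (hF h)⟩
  rw [Real.dist_eq]
  exact tendsto_nhds_unique ((hγ t).dist (hγ t'))
    (tendsto_const_nhds.congr' (EventuallyEq.symm (hF (hdist t t'))))

theorem IsCAT0.exists_isometry_of_dist_le [ProperSpace X] (hX : IsCAT0 X) {A B : ℝ → X}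
    (hA : IsGeodesicRay A) (hB : IsGeodesicRay B) (hAB : A 0 = B 0) {μ : ℕ → ℝ}
    (hμ : Tendsto μ atTop atTop) {g : ℕ → ℝ → X} {L s : ℕ → ℝ}
    (hg : ∀ k, IsGeodesicOn (g k) 0 (L k)) (hg0 : ∀ k, g k 0 = B (μ k))
    (hgL : ∀ k, g k (L k) = A (μ k)) (hs : ∀ k, s k ∈ Icc 0 (L k)) {a R : ℝ} (ha : 0 ≤ a)
    (hz : ∀ k, dist (g k (s k)) (A a) ≤ R) :
    ∃ γ : ℝ → X, Isometry γ ∧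
      ∀ t, 0 ≤ t → dist (γ t) (A t) ≤ a + R ∧ dist (γ (-t)) (B t) ≤ a + R := by
  have hgs : ∀ k, dist (g k (s k)) (B 0) ≤ a + R := fun k => by
    rw [← hAB]
    linarith [dist_triangle (g k (s k)) (A a) (A 0), hz k, hA.dist_eq le_rfl ha,
      dist_comm (A a) (A 0)]
  have hs_ge : ∀ᶠ k in atTop, μ k - (a + R) ≤ s k := by
    filter_upwards [hμ.eventually_ge_atTop 0] with k hk
    have := hB.sub_le_dist le_rfl hk (hgs k)
    rwa [zero_add, ← hg0, dist_comm, (hg k).dist_eq (left_mem_Icc.2 ((hs k).1.trans (hs k).2))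
      (hs k) (hs k).1, sub_zero] at this
  have hLs_ge : ∀ᶠ k in atTop, μ k - (a + R) ≤ L k - s k := by
    filter_upwards [hμ.eventually_ge_atTop a] with k hk
    have := hA.sub_le_dist ha hk (hz k)
    rwa [← hgL, (hg k).dist_eq (hs k) (right_mem_Icc.2 ((hs k).1.trans (hs k).2)) (hs k).2]
      at this
  have hμR : Tendsto (fun k => μ k - (a + R)) atTop atTop := tendsto_atTop_add_const_right _ _ hμ
  have hs_top := tendsto_atTop_mono' _ hs_ge hμR
  have hLs_top := tendsto_atTop_mono' _ hLs_ge hμR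
  obtain ⟨γ, hγ, hlim⟩ := exists_isometry_of_isGeodesicOn hg hz hs_top hLs_top
  refine ⟨γ, hγ, fun t ht => ⟨?_, ?_⟩⟩
  · have hγA : dist (γ t) (A (a + t)) ≤ R := hlim t _ _ <| by
      filter_upwards [hμ.eventually_ge_atTop (a + t), hLs_top.eventually_ge_atTop t]
        with k hk hk'
      have hσ₁ : IsGeodesicOn (fun v => g k (s k + v)) 0 (L k - s k) :=
        (hg k).comp_const_add (by simpa using (hs k).1) (by simp)
      have hσ₂ : IsGeodesicOn (fun v => A (a + v)) 0 (μ k - a) :=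
        (hA.isGeodesicOn ha (μ k)).comp_const_add (by simp) (by simp)
      have := hX.dist_le_of_isGeodesicOn hσ₁ hσ₂ ht hk' (by linarith)
      rw [add_zero, add_zero, add_sub_cancel, add_sub_cancel, hgL, dist_self, mul_zero,
        add_zero] at this
      exact this.trans (hz k)
    calc dist (γ t) (A t) ≤ dist (γ t) (A (a + t)) + dist (A (a + t)) (A t) := dist_triangle _ _ _
      _ ≤ R + a := by
          rw [dist_comm (A (a + t)), hA.dist_eq ht (by linarith)]
          linarith
      _ = a + R := add_comm R a
  · refine hlim (-t) _ _ ?_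
    filter_upwards [hμ.eventually_ge_atTop t, hs_top.eventually_ge_atTop t] with k hk hk'
    have hσ₁ : IsGeodesicOn (fun v => g k (s k - v)) 0 (s k) :=
      (hg k).comp_const_sub (by simp) (by simpa using (hs k).2)
    have := hX.dist_le_of_isGeodesicOn hσ₁ (hB (μ k)) ht hk' hk
    rw [sub_zero, sub_self, hg0, dist_self, mul_zero, add_zero] at this
    rw [← sub_eq_add_neg]
    exact this.trans (hgs k)

namespace IsCAT0

variable {A B : ℝ → X} {P : Set X} {C l u : ℝ}

theorem exists_isometry_of_eventually_lt_dist_projSet [ProperSpace X] (hX : IsCAT0 X)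
    (hA : IsGeodesicRay A) (hB : IsGeodesicRay B) (hAB : A 0 = B 0) (hP : IsContractingSet P C)
    (hPc : IsCompact P) (hPne : P.Nonempty) (hu : IsGreatest (nearTimes A P C) u)
    (hfar : ∀ᶠ m : ℕ in atTop, ∀ p ∈ ProjSet P (A m), ∀ q ∈ ProjSet P (B m), C < dist p q) :
    ∃ γ : ℝ → X, Isometry γ ∧
      ∀ t, 0 ≤ t → dist (γ t) (A t) ≤ u + 4 * C ∧ dist (γ (-t)) (B t) ≤ u + 4 * C := by
  obtain ⟨M, hM⟩ := eventually_atTop.1 (hfar.and (eventually_gt_atTop ⌈u⌉₊))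
  have hnear : ∀ k : ℕ, ∃ (g : ℝ → X) (L s : ℝ), IsGeodesicOn g 0 L ∧
      g 0 = B (M + k : ℕ) ∧ g L = A (M + k : ℕ) ∧ s ∈ Icc 0 L ∧ dist (g s) (A u) ≤ 4 * C := by
    intro k
    obtain ⟨hfar_m, hm⟩ := hM (M + k) (Nat.le_add_right M k)
    have hum : u < (M + k : ℕ) := (Nat.le_ceil u).trans_lt (Nat.cast_lt.2 hm)
    obtain ⟨g, hg, hg0, hgL⟩ := hX.1 (A (M + k : ℕ)) (B (M + k : ℕ))
    set L := dist (A (M + k : ℕ)) (B (M + k : ℕ))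
    obtain ⟨p, hp⟩ := hPc.nonempty_projSet hPne (A (M + k : ℕ))
    obtain ⟨q, hq⟩ := hPc.nonempty_projSet hPne (B (M + k : ℕ))
    obtain ⟨v, hv, hvp⟩ := hP.exists_dist_le_two_mul_of_lt_dist hPc hPne hg dist_nonneg
      (hg0 ▸ hp) (hgL ▸ hq) (hfar_m p hp q hq)
    refine ⟨fun w => g (L - w), L, L - v, hg.comp_const_sub (by simp) (by simp),
      by simp [hgL], by simp [hg0], ⟨by linarith [hv.2], by linarith [hv.1]⟩, ?_⟩
    calc dist (g (L - (L - v))) (A u) ≤ dist (g v) p + dist p (A u) := by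
          rw [sub_sub_cancel]; exact dist_triangle _ _ _
      _ ≤ 2 * C + 2 * C := add_le_add hvp
          (dist_comm (A u) p ▸ hA.dist_projSet_le_of_isGreatest hP hPc hPne hu hum hp)
      _ = 4 * C := by ring
  choose g L s hg hg0 hgL hs hz using hnear
  have hμ : Tendsto (fun k : ℕ => ((M + k : ℕ) : ℝ)) atTop atTop :=
    tendsto_natCast_atTop_atTop.comp (tendsto_atTop_mono (Nat.le_add_left · M) tendsto_id)
  exact hX.exists_isometry_of_dist_le hA hB hAB hμ hg hg0 hgL hs hu.1.1 hz

theorem dist_le_of_dist_projSet_le (hX : IsCAT0 X) (hA : IsGeodesicRay A)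
    (hB : IsGeodesicRay B) (hAB : A 0 = B 0) (hC : 0 < C) (hP : IsContractingSet P C)
    (hPc : IsCompact P) (hPne : P.Nonempty) (hl : IsLeast (nearTimes A P C) l) (hl0 : 0 < l)
    (hu : IsGreatest (nearTimes A P C) u) (hlu : l + 8 * C ≤ u) {m : ℝ} (hum : u < m)
    {p q : X} (hp : p ∈ ProjSet P (A m)) (hq : q ∈ ProjSet P (B m)) (hpq : dist p q ≤ C)
    {t : ℝ} (ht : 0 ≤ t) (htl : t + 4 * C ≤ l) : dist (A t) (B t) ≤ 8 * C := by
  obtain ⟨o, ho⟩ := hPc.nonempty_projSet hPne (A 0)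
  have hlo : dist (A l) o ≤ 2 * C := hA.dist_projSet_le_of_isLeast hP hPc hPne hl hl0 ho
  have hup : dist (A u) p ≤ 2 * C := hA.dist_projSet_le_of_isGreatest hP hPc hPne hu hum hp
  have hoq : C < dist o q := by
    have hlu' := hA.dist_eq hl0.le (hl.2 hu.1)
    linarith [dist_triangle4 (A l) o q (A u), dist_triangle q p (A u), dist_comm (A u) p,
      dist_comm q p]
  obtain ⟨s, hs, hso⟩ :=
    hP.exists_dist_le_two_mul_of_lt_dist hPc hPne (hB m) (hu.1.1.trans hum.le) (hAB ▸ ho) hq hoq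
  have hls : dist (A l) (B s) ≤ 4 * C := by
    linarith [dist_triangle (A l) o (B s), dist_comm o (B s)]
  have hts : t ≤ s := by
    have h₁ := hA.dist_eq le_rfl hl0.le
    have h₂ := hB.dist_eq le_rfl hs.1
    rw [← hAB] at h₂
    linarith [dist_triangle (A 0) (B s) (A l), dist_comm (B s) (A l)]
  have := hX.dist_le_of_isGeodesicOn (hA l) (hB s) ht (by linarith) hts
  rw [hAB, dist_self, zero_add] at this
  linarith

end IsCAT0

theorem image_nearTimes_comp_toNNReal (α : ℝ≥0 → X) (P : Set X) (C : ℝ) :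
    (fun t : ℝ => α t.toNNReal) '' nearTimes (fun t => α t.toNNReal) P C =
      {x | x ∈ range α ∧ infDist x P ≤ C} := by
  ext x
  constructor
  · rintro ⟨t, ⟨-, ht⟩, rfl⟩
    exact ⟨mem_range_self _, ht⟩
  · rintro ⟨⟨t, rfl⟩, ht⟩
    exact ⟨t, ⟨t.2, by simpa using ht⟩, by simp⟩

end

/-- **Visibility from a ray recurrent to contracting segments.**
Let `α` be a geodesic ray in a proper CAT(0) space ending at `ξ`, meeting the
`C`-neighborhoods of a sequence of `C`-contracting geodesic segments `Pₙ` in sets of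
diameter `≥ 8C` that leave every compact set. Then for every ray `β` from the same
basepoint representing a boundary point `η ≠ ξ`, there is a bi-infinite geodesic
from `ξ` to `η`. -/
theorem visibility_of_recurrent_ray {X : Type*} [MetricSpace X] [ProperSpace X]
    (hX : IsCAT0 X) (α : ℝ≥0 → X) (hα : Isometry α)
    (C : ℝ) (hC : 0 < C) (P : ℕ → Set X)
    (hseg : ∀ n, ∃ (γ : ℝ → X) (a b : ℝ), a ≤ b ∧ IsGeodesicOn γ a b ∧ P n = γ '' Set.Icc a b)
    (hcontr : ∀ n, IsContractingSet (P n) C)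
    (hdiam : ∀ n, 8 * C ≤ Metric.diam {x | x ∈ Set.range α ∧ Metric.infDist x (P n) ≤ C})
    (hescape : ∀ R : ℝ, ∃ N : ℕ, ∀ n ≥ N, ∀ x ∈ Set.range α,
      Metric.infDist x (P n) ≤ C → R ≤ dist (α 0) x)
    (β : ℝ≥0 → X) (hβ : Isometry β) (hβ0 : β 0 = α 0)
    (hne : ¬ ∃ C' : ℝ, ∀ t : ℝ≥0, dist (α t) (β t) ≤ C') :
    ∃ γ : ℝ → X, Isometry γ ∧ (∃ C₁ : ℝ, ∀ t : ℝ≥0, dist (γ (t : ℝ)) (α t) ≤ C₁) ∧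
      (∃ C₂ : ℝ, ∀ t : ℝ≥0, dist (γ (-(t : ℝ))) (β t) ≤ C₂) := by
  set A : ℝ → X := fun t => α t.toNNReal
  set B : ℝ → X := fun t => β t.toNNReal
  have hA : IsGeodesicRay A := hα.isGeodesicRay_comp_toNNReal
  have hB : IsGeodesicRay B := hβ.isGeodesicRay_comp_toNNReal
  have hAB : A 0 = B 0 := by simp [A, B, hβ0]
  have hP : ∀ n, IsCompact (P n) ∧ (P n).Nonempty := fun n => by
    obtain ⟨γ, a, b, hab, hγ, hPn⟩ := hseg n
    exact hPn ▸ ⟨hγ.isCompact_image, (nonempty_Icc.2 hab).image γ⟩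
  choose l u hl hu hlu using fun n => hA.exists_isLeast_isGreatest_nearTimes
    (hP n).1.isBounded (hP n).2 (by positivity : (0 : ℝ) < 8 * C)
    ((hdiam n).trans_eq (by rw [image_nearTimes_comp_toNNReal]))
  have hl_top : Tendsto l atTop atTop := tendsto_atTop.2 fun R => by
    obtain ⟨N, hN⟩ := hescape R
    filter_upwards [eventually_ge_atTop N] with n hn
    have hR := hN n hn (A (l n)) (mem_range_self _) (hl n).1.2
    rwa [show α 0 = A 0 by simp [A], hA.dist_eq le_rfl (hl n).1.1, sub_zero] at hR
  by_cases hfar : ∃ n, ∀ᶠ m : ℕ in atTop,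
      ∀ p ∈ ProjSet (P n) (A m), ∀ q ∈ ProjSet (P n) (B m), C < dist p q
  · obtain ⟨n, hn⟩ := hfar
    obtain ⟨γ, hγ, hγAB⟩ := hX.exists_isometry_of_eventually_lt_dist_projSet hA hB hAB
      (hcontr n) (hP n).1 (hP n).2 (hu n) hn
    exact ⟨γ, hγ, ⟨_, fun t => by simpa [A] using (hγAB t t.2).1⟩,
      ⟨_, fun t => by simpa [B] using (hγAB t t.2).2⟩⟩
  · simp only [not_exists, not_eventually, not_forall, not_lt, exists_prop] at hfar
    refine absurd ⟨8 * C, fun t => ?_⟩ hne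
    obtain ⟨n, hn, hl0⟩ :=
      ((hl_top.eventually_ge_atTop (t + 4 * C)).and (hl_top.eventually_gt_atTop 0)).exists
    obtain ⟨m, ⟨p, hp, q, hq, hpq⟩, hm⟩ :=
      ((hfar n).and_eventually (eventually_gt_atTop ⌈u n⌉₊)).exists
    simpa [A, B] using hX.dist_le_of_dist_projSet_le hA hB hAB hC (hcontr n) (hP n).1 (hP n).2
      (hl n) hl0 (hu n) (hlu n) ((Nat.le_ceil _).trans_lt (Nat.cast_lt.2 hm)) hp hq hpq t.2 hn
end

section
/- Let f be a hyperbolic isometry of a proper CAT(0) space X that is not rank-one, and let γ be a geodesic ray contained in Min(f). Then γ is contained in a flat quadrant, i.e., an isometrically embedded copy of {(x,y) ∈ 𝔼² : x ≥ 0, y ≥ 0}. -/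
open scoped NNReal

/-!
Through every point `γ u` of the ray passes an axis `A u` of `f`: the `f`-translates of a
geodesic from `γ u` to `f (γ u)` form a local geodesic, hence a geodesic line. By the flat strip
theorem any two axes bound a Euclidean strip, recorded by a translation `z u v` of the model plane
`ℂ`. As `dist (γ u) (γ v) = |u - v|`, the triangle inequality is sharp along the ray, which forces
`z u v = (v - u) ω` for one `ω` in the closed upper half-plane: the axes sweep out a flat
half-plane in which the ray issues from a boundary point. If `ω` is real the ray lies on the axis
`A 0`, and the flat half-plane bounded by `A 0` (which exists since `f` is not rank-one) takes its
place. Finally, a closed half-plane contains a quadrant containing any ray from a boundary point.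
-/

open Set

section CAT0

variable {X : Type*} [MetricSpace X]

lemma IsGeodesicOn.dist_eq_sub {σ : ℝ → X} {a b s t : ℝ} (h : IsGeodesicOn σ a b)
    (hs : s ∈ Icc a b) (ht : t ∈ Icc a b) (hst : s ≤ t) : dist (σ s) (σ t) = t - s := by
  rw [h s hs t ht, abs_sub_comm, abs_of_nonneg (sub_nonneg.2 hst)]

lemma IsGeodesicOn.reverse {σ : ℝ → X} {a b : ℝ} (h : IsGeodesicOn σ a b) :
    IsGeodesicOn (fun x => σ (a + b - x)) a b := by
  intro s hs t ht
  rw [h _ ⟨by linarith [hs.2], by linarith [hs.1]⟩ _ ⟨by linarith [ht.2], by linarith [ht.1]⟩,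
    abs_sub_comm]
  ring_nf

lemma IsCAT0.dist_sq_midpoint_le (hX : IsCAT0 X) {σ : ℝ → X} {a b : ℝ} (hab : a ≤ b)
    (hσ : IsGeodesicOn σ a b) (x : X) :
    dist x (σ ((a + b) / 2)) ^ 2 ≤
      (dist x (σ a) ^ 2 + dist x (σ b) ^ 2) / 2 - (b - a) ^ 2 / 4 := by
  have h := hX.2 σ a b hab hσ x (1 / 2) ⟨by norm_num, by norm_num⟩
  rw [hσ.dist_eq_sub ⟨le_rfl, hab⟩ ⟨hab, le_rfl⟩ hab,
    show a + 1 / 2 * (b - a) = (a + b) / 2 by ring] at h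
  linarith

lemma IsCAT0.dist_le_of_eq_start (hX : IsCAT0 X) {σ σ' : ℝ → X} {a b a' b' t : ℝ}
    (hab : a ≤ b) (hab' : a' ≤ b') (hσ : IsGeodesicOn σ a b) (hσ' : IsGeodesicOn σ' a' b')
    (hstart : σ a = σ' a') (ht : t ∈ Icc (0 : ℝ) 1) :
    dist (σ (a + t * (b - a))) (σ' (a' + t * (b' - a'))) ≤ t * dist (σ b) (σ' b') := by
  obtain ⟨ht0, ht1⟩ := ht
  have hx : a + t * (b - a) ∈ Icc a b := ⟨by nlinarith, by nlinarith⟩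
  have hxa : dist (σ (a + t * (b - a))) (σ' a') = t * (b - a) := by
    rw [← hstart, dist_comm, hσ.dist_eq_sub ⟨le_rfl, hab⟩ hx (by nlinarith)]
    ring
  have hℓ : dist (σ a) (σ b) = b - a := hσ.dist_eq_sub ⟨le_rfl, hab⟩ ⟨hab, le_rfl⟩ hab
  have hℓ' : dist (σ' a') (σ' b') = b' - a' := hσ'.dist_eq_sub ⟨le_rfl, hab'⟩ ⟨hab', le_rfl⟩ hab'
  have h₁ := hX.2 σ' a' b' hab' hσ' (σ (a + t * (b - a))) t ⟨ht0, ht1⟩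
  have h₂ := hX.2 σ a b hab hσ (σ' b') t ⟨ht0, ht1⟩
  rw [hxa, hℓ'] at h₁
  rw [hℓ, dist_comm _ (σ a), hstart, hℓ', dist_comm (σ' b') (σ _), dist_comm (σ' b') (σ b)] at h₂
  refine (sq_le_sq₀ dist_nonneg (by positivity)).1 ?_
  nlinarith [mul_le_mul_of_nonneg_left h₂ ht0]

lemma IsCAT0.dist_geodesic_le (hX : IsCAT0 X) {σ σ' : ℝ → X} {a b a' b' t : ℝ}
    (hab : a ≤ b) (hab' : a' ≤ b') (hσ : IsGeodesicOn σ a b) (hσ' : IsGeodesicOn σ' a' b')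
    (ht : t ∈ Icc (0 : ℝ) 1) :
    dist (σ (a + t * (b - a))) (σ' (a' + t * (b' - a'))) ≤
      (1 - t) * dist (σ a) (σ' a') + t * dist (σ b) (σ' b') := by
  obtain ⟨η, hη, hη0, hηm⟩ := hX.1 (σ a) (σ' b')
  set m := dist (σ a) (σ' b')
  have hm : 0 ≤ m := dist_nonneg
  have h₁ := hX.dist_le_of_eq_start hab hm hσ hη hη0.symm ht
  have h₂ := hX.dist_le_of_eq_start hm hab' hη.reverse hσ'.reverse
    (by simp only [zero_add, sub_zero, add_sub_cancel_left, hηm]) (t := 1 - t)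
    ⟨by linarith [ht.2], by linarith [ht.1]⟩
  rw [hηm] at h₁
  simp only [zero_add, sub_zero, sub_self, add_sub_cancel_right, hη0] at h₁ h₂
  rw [show m - (1 - t) * m = t * m by ring,
    show a' + b' - (a' + (1 - t) * (b' - a')) = a' + t * (b' - a') by ring] at h₂
  linarith [dist_triangle (σ (a + t * (b - a))) (η (t * m)) (σ' (a' + t * (b' - a')))]

lemma Isometry.isGeodesicOn {c : ℝ → X} (hc : Isometry c) (a b : ℝ) : IsGeodesicOn c a b :=
  fun s _ t _ => by rw [hc.dist_eq, Real.dist_eq]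

lemma IsCAT0.convexOn_dist (hX : IsCAT0 X) {c c' : ℝ → X} (hc : Isometry c)
    (hc' : Isometry c') : ConvexOn ℝ univ (fun x => dist (c x) (c' x)) := by
  refine LinearOrder.convexOn_of_lt convex_univ fun x _ y _ hxy p q hp hq hpq => ?_
  have h := hX.dist_geodesic_le hxy.le hxy.le (hc.isGeodesicOn x y) (hc'.isGeodesicOn x y)
    ⟨hq.le, by linarith⟩ (t := q)
  rw [show x + q * (y - x) = p • x + q • y by simp only [smul_eq_mul]; linear_combination -x * hpq,
    show 1 - q = p by linarith] at h
  simpa only [smul_eq_mul] using h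

end CAT0

lemma ConvexOn.eq_of_periodic {g : ℝ → ℝ} {τ : ℝ} (hg : ConvexOn ℝ univ g)
    (hper : Function.Periodic g τ) (hτ : 0 < τ) (x y : ℝ) : g x = g y := by
  have key : ∀ x y, g y ≤ g x := by
    intro x y
    obtain ⟨n, hn⟩ := exists_nat_ge (|y - x| / τ)
    have hy : y ∈ segment ℝ (x - n * τ) (x + n * τ) := by
      rw [div_le_iff₀ hτ] at hn
      rw [segment_eq_Icc (by nlinarith [Nat.cast_nonneg (α := ℝ) n])]
      constructor <;> linarith [abs_le.1 hn]
    calc g y ≤ max (g (x - n * τ)) (g (x + n * τ)) := hg.le_on_segment trivial trivial hy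
      _ = g x := by rw [(hper.nat_mul n).sub_eq, hper.nat_mul n x, max_self]
  exact le_antisymm (key y x) (key x y)

section LocalToGlobal

variable {X : Type*} [MetricSpace X]

lemma dist_le_of_locally_geodesic {c : ℝ → X} {L : ℝ} (hL : 0 ≤ L)
    (hloc : ∀ s t, s ≤ t → t ≤ s + L → dist (c s) (c t) = t - s) (n : ℕ) :
    ∀ s t, s ≤ t → t ≤ s + n * L → dist (c s) (c t) ≤ t - s := by
  induction n with
  | zero =>
    intro s t hst h
    obtain rfl : t = s := by simp only [CharP.cast_eq_zero, zero_mul, add_zero] at h; linarith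
    simp
  | succ n ih =>
    intro s t hst h
    rcases le_total t (s + L) with h' | h'
    · exact (hloc s t hst h').le
    · calc dist (c s) (c t) ≤ dist (c s) (c (s + L)) + dist (c (s + L)) (c t) :=
            dist_triangle _ _ _
        _ ≤ (s + L - s) + (t - (s + L)) :=
            add_le_add (hloc s _ (by linarith) le_rfl).le (ih _ _ h' (by push_cast at h; linarith))
        _ = t - s := by ring

lemma IsCAT0.isometry_of_locally_geodesic (hX : IsCAT0 X) {c : ℝ → X} {L : ℝ} (hL : 0 < L)
    (hloc : ∀ s t, s ≤ t → t ≤ s + L → dist (c s) (c t) = t - s) : Isometry c := by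
  have hgeo : ∀ a, IsGeodesicOn c (a - L) a := fun a x hx y hy => by
    rcases le_total x y with hxy | hxy
    · rw [hloc x y hxy (by linarith [hx.1, hy.2]), abs_sub_comm, abs_of_nonneg (by linarith)]
    · rw [dist_comm, hloc y x hxy (by linarith [hy.1, hx.2]), abs_of_nonneg (by linarith)]
  -- each step extends the range of validity by `L / 2`, via the midpoint of `[t - L, t]`
  have grow : ∀ n : ℕ, ∀ s t, s ≤ t → t ≤ s + L + n * (L / 2) → dist (c s) (c t) = t - s := by
    intro n
    induction n with
    | zero => exact fun s t hst h => hloc s t hst (by simpa using h)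
    | succ n ih =>
      intro s t hst h
      rcases le_total t (s + L + n * (L / 2)) with h' | h'
      · exact ih s t hst h'
      · have hn : (0 : ℝ) ≤ n * (L / 2) := by positivity
        push_cast at h
        have hmid := hX.dist_sq_midpoint_le (by linarith) (hgeo t) (c s)
        rw [show (t - L + t) / 2 = t - L / 2 by ring, ih s (t - L) (by linarith) (by linarith),
          ih s (t - L / 2) (by linarith) (by linarith)] at hmid
        obtain ⟨k, hk⟩ := exists_nat_ge ((t - s) / L)
        refine le_antisymm (dist_le_of_locally_geodesic hL.le hloc k s t hst ?_) ?_
        · rw [div_le_iff₀ hL] at hk; linarith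
        · exact (sq_le_sq₀ (by linarith) dist_nonneg).1 (by nlinarith)
  refine Isometry.of_dist_eq fun s t => ?_
  wlog hst : s ≤ t generalizing s t
  · rw [dist_comm, this t s (by linarith), dist_comm]
  obtain ⟨n, hn⟩ := exists_nat_ge ((t - s) / (L / 2))
  rw [div_le_iff₀ (by positivity)] at hn
  rw [grow n s t hst (by linarith), Real.dist_eq, abs_sub_comm, abs_of_nonneg (by linarith)]

end LocalToGlobal

section Axis

variable {X : Type*} [MetricSpace X]

def IsAxis (f : X → X) (τ : ℝ) (c : ℝ → X) : Prop :=
  Isometry c ∧ ∀ t, f (c t) = c (t + τ)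

/-- A terminal piece of a geodesic from `σ 0` to `f (σ 0)` of minimal length `τ`, followed by
an initial piece of its `f`-image, is again a geodesic. -/
lemma IsCAT0.dist_geodesic_apply_of_le (hX : IsCAT0 X) {f : X → X} (hf : Isometry f) {τ : ℝ}
    (hτ : 0 < τ) (hlow : ∀ x, τ ≤ dist (f x) x) {σ : ℝ → X} (hσ : IsGeodesicOn σ 0 τ)
    (hστ : σ τ = f (σ 0)) {s t : ℝ} (ht : 0 ≤ t) (hts : t ≤ s) (hs : s ≤ τ) :
    dist (σ s) (f (σ t)) = τ - s + t := by
  have h0 : (0 : ℝ) ∈ Icc 0 τ := ⟨le_rfl, hτ.le⟩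
  have hτ' : τ ∈ Icc 0 τ := ⟨hτ.le, le_rfl⟩
  have hlen : dist (σ 0) (σ τ) = τ := by rw [hσ.dist_eq_sub h0 hτ' hτ.le, sub_zero]
  -- the displacement of `f` is convex along `σ`, and equals `τ` at both ends
  have hdisp : dist (f (σ t)) (σ t) = τ := by
    refine le_antisymm ?_ (hlow _)
    have hfσ : IsGeodesicOn (f ∘ σ) 0 τ := fun x hx y hy => by
      rw [Function.comp_apply, Function.comp_apply, hf.dist_eq, hσ x hx y hy]
    have h := hX.dist_geodesic_le hτ.le hτ.le hσ hfσ (t := t / τ)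
      ⟨div_nonneg ht hτ.le, (div_le_one hτ).2 (hts.trans hs)⟩
    rw [zero_add, sub_zero, div_mul_cancel₀ _ hτ.ne', Function.comp_apply, Function.comp_apply,
      Function.comp_apply, ← hστ, hlen, hστ, hf.dist_eq, ← hστ, hlen] at h
    rw [dist_comm]
    linarith
  apply le_antisymm
  · calc dist (σ s) (f (σ t)) ≤ dist (σ s) (σ τ) + dist (f (σ 0)) (f (σ t)) := by
          rw [← hστ]; exact dist_triangle _ _ _
      _ = τ - s + t := by
          rw [hf.dist_eq, hσ.dist_eq_sub ⟨by linarith, hs⟩ hτ' hs,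
            hσ.dist_eq_sub h0 ⟨ht, by linarith⟩ ht, sub_zero]
  · have h := dist_triangle (f (σ t)) (σ s) (σ t)
    rw [hdisp, dist_comm (σ s), hσ.dist_eq_sub ⟨ht, by linarith⟩ ⟨by linarith, hs⟩ hts,
      dist_comm] at h
    linarith

lemma IsCAT0.exists_axis (hX : IsCAT0 X) (e : X ≃ᵢ X) {τ : ℝ} (hτ : 0 < τ)
    (hlow : ∀ x, τ ≤ dist (e x) x) {p : X} (hp : dist (e p) p = τ) :
    ∃ c, IsAxis e τ c ∧ c 0 = p := by
  obtain ⟨σ, hσ, hσ0, hστ⟩ := hX.1 p (e p)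
  rw [dist_comm, hp] at hσ hστ
  set c : ℝ → X := fun t => (e ^ toIcoDiv hτ 0 t) (σ (t - toIcoDiv hτ 0 t * τ))
  have hc : ∀ n : ℤ, ∀ t ∈ Icc (n * τ) (n * τ + τ), c t = (e ^ n) (σ (t - n * τ)) := by
    intro n t ht
    rcases ht.2.lt_or_eq with ht' | rfl
    · have hn : toIcoDiv hτ 0 t = n := toIcoDiv_eq_of_sub_zsmul_mem_Ico hτ
        (by rw [zsmul_eq_mul, zero_add]; exact ⟨by linarith [ht.1], by linarith⟩)
      simp only [c, hn]
    · have hn : toIcoDiv hτ 0 (n * τ + τ) = n + 1 := toIcoDiv_eq_of_sub_zsmul_mem_Ico hτ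
        (by rw [zsmul_eq_mul, zero_add]; push_cast; exact ⟨by linarith, by linarith⟩)
      simp only [c, hn, zpow_add_one, IsometryEquiv.mul_apply]
      push_cast
      rw [show n * τ + τ - (n + 1) * τ = 0 by ring, show n * τ + τ - n * τ = τ by ring, hσ0, hστ]
  have hper : ∀ t, e (c t) = c (t + τ) := by
    intro t
    simp only [c, toIcoDiv_add_right, ← IsometryEquiv.mul_apply, ← zpow_one_add, add_comm (1 : ℤ)]
    push_cast
    ring_nf
  have hloc : ∀ s t, s ≤ t → t ≤ s + τ → dist (c s) (c t) = t - s := by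
    intro s t hst hts
    have hs := sub_toIcoDiv_zsmul_mem_Ico hτ 0 s
    rw [zsmul_eq_mul, zero_add] at hs
    set n := toIcoDiv hτ 0 s
    obtain ⟨hs₁, hs₂⟩ := hs
    rw [hc n s ⟨by linarith, by linarith⟩]
    rcases le_total t (n * τ + τ) with htn | htn
    · rw [hc n t ⟨by linarith, htn⟩, (e ^ n).dist_eq,
        hσ.dist_eq_sub ⟨by linarith, by linarith⟩ ⟨by linarith, by linarith⟩ (by linarith)]
      ring
    · rw [hc (n + 1) t ⟨by push_cast; linarith, by push_cast; linarith⟩,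
        zpow_add_one, IsometryEquiv.mul_apply, (e ^ n).dist_eq,
        hX.dist_geodesic_apply_of_le e.isometry hτ hlow hσ (by rw [hστ, hσ0])
          (by push_cast; linarith) (by push_cast; linarith) (by linarith)]
      push_cast
      ring
  refine ⟨c, ⟨hX.isometry_of_locally_geodesic hτ hloc, hper⟩, ?_⟩
  simp [c, hσ0]

end Axis

lemma eq_add_mul_of_midpoint {H : ℝ → ℝ} (hH : Continuous H)
    (hmid : ∀ a b, H a + H b = 2 * H ((a + b) / 2)) (x : ℝ) :
    H x = H 0 + (H 1 - H 0) * x := by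
  let K : ℝ →+ ℝ := AddMonoidHom.mk' (fun x => H x - H 0) fun a b => by
    have h₁ := hmid (a + b) 0
    have h₂ := hmid a b
    rw [add_zero] at h₁
    linarith
  have hK := map_real_smul K (hH.sub continuous_const) x 1
  simp only [K, AddMonoidHom.mk'_apply, smul_eq_mul, mul_one] at hK
  linarith

section Strip

variable {X : Type*} [MetricSpace X] {f : X → X} {τ : ℝ} {c c' : ℝ → X}

lemma IsAxis.dist_eq_dist_sub (hX : IsCAT0 X) (hf : Isometry f) (hτ : 0 < τ)
    (hc : IsAxis f τ c) (hc' : IsAxis f τ c') (s t : ℝ) :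
    dist (c s) (c' t) = dist (c 0) (c' (t - s)) := by
  have hconv := hX.convexOn_dist hc.1 (hc'.1.comp (isometry_add_right (t - s)))
  have hper : Function.Periodic (fun x => dist (c x) (c' (x + (t - s)))) τ := fun x => by
    dsimp only
    rw [add_right_comm, ← hc.2, ← hc'.2, hf.dist_eq]
  simpa using hconv.eq_of_periodic hper hτ s 0

lemma IsCAT0.dist_sq_sub_sq_midpoint_le (hX : IsCAT0 X) (hc : Isometry c) (x : X) (a b : ℝ) :
    dist x (c ((a + b) / 2)) ^ 2 - ((a + b) / 2) ^ 2 ≤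
      (dist x (c a) ^ 2 - a ^ 2 + (dist x (c b) ^ 2 - b ^ 2)) / 2 := by
  wlog hab : a ≤ b generalizing a b
  · rw [add_comm a, add_comm (dist x (c a) ^ 2 - a ^ 2)]
    exact this b a (by linarith)
  have h := hX.dist_sq_midpoint_le hab (hc.isGeodesicOn a b) x
  linarith

/-- The reverse of `IsCAT0.dist_sq_sub_sq_midpoint_le` for parallel lines, obtained from the
midpoint of a geodesic from `c ((b - a) / 2)` to `c' ((a + b) / 2)`. -/
lemma IsCAT0.le_dist_sq_sub_sq_midpoint (hX : IsCAT0 X) (hc : Isometry c)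
    (hc' : Isometry c') (hpar : ∀ s t, dist (c s) (c' t) = dist (c 0) (c' (t - s))) (a b : ℝ) :
    dist (c 0) (c' a) ^ 2 - a ^ 2 + (dist (c 0) (c' b) ^ 2 - b ^ 2) ≤
      2 * (dist (c 0) (c' ((a + b) / 2)) ^ 2 - ((a + b) / 2) ^ 2) := by
  obtain ⟨σ, hσ, hσ0, hσw⟩ := hX.1 (c ((b - a) / 2)) (c' ((a + b) / 2))
  have hw : dist (c ((b - a) / 2)) (c' ((a + b) / 2)) = dist (c 0) (c' a) := by
    rw [hpar]; ring_nf
  rw [hw] at hσ hσw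
  have h₁ := hX.dist_sq_midpoint_le dist_nonneg hσ (c 0)
  have h₂ := hX.dist_sq_midpoint_le dist_nonneg hσ (c' b)
  rw [hσ0, hσw, hc.dist_eq, Real.dist_eq, zero_sub, abs_neg, sq_abs] at h₁
  rw [hσ0, hσw, hc'.dist_eq, Real.dist_eq, sq_abs, dist_comm (c' b) (c _), hpar ((b - a) / 2) b,
    show b - (b - a) / 2 = (a + b) / 2 by ring] at h₂
  set m := σ ((0 + dist (c 0) (c' a)) / 2)
  have htri := dist_triangle (c 0) m (c' b)
  rw [dist_comm m] at htri
  nlinarith [mul_self_le_mul_self dist_nonneg htri, sq_nonneg (dist (c 0) m - dist (c' b) m)]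

/-- Flat strip theorem. In the model plane `ℂ`, `c` is the real line and `c'` the real line
translated by `z`. -/
lemma IsAxis.exists_strip (hX : IsCAT0 X) (hf : Isometry f) (hτ : 0 < τ)
    (hc : IsAxis f τ c) (hc' : IsAxis f τ c') :
    ∃ z : ℂ, 0 ≤ z.im ∧ ∀ s t : ℝ, dist (c s) (c' t) = dist (s : ℂ) (t + z) := by
  have hpar := hc.dist_eq_dist_sub hX hf hτ hc'
  set H : ℝ → ℝ := fun r => dist (c 0) (c' r) ^ 2 - r ^ 2
  have hH : Continuous H := by
    have := hc'.1.continuous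
    fun_prop
  have hmid : ∀ a b, H a + H b = 2 * H ((a + b) / 2) := fun a b =>
    le_antisymm (hX.le_dist_sq_sub_sq_midpoint hc.1 hc'.1 hpar a b)
      (by simp only [H]; linarith [hX.dist_sq_sub_sq_midpoint_le hc'.1 (c 0) a b])
  set α := H 1 - H 0
  have hW : 0 ≤ H 0 - (α / 2) ^ 2 := by
    have h := eq_add_mul_of_midpoint hH hmid (-(α / 2))
    simp only [H] at h
    nlinarith [sq_nonneg (dist (c 0) (c' (-(α / 2))))]
  refine ⟨⟨α / 2, √(H 0 - (α / 2) ^ 2)⟩, Real.sqrt_nonneg _, fun s t => ?_⟩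
  have h := eq_add_mul_of_midpoint hH hmid (t - s)
  rw [hpar, ← Real.sqrt_sq dist_nonneg, Complex.dist_eq_re_im]
  congr 1
  simp only [Complex.ofReal_re, Complex.add_re, Complex.ofReal_im, Complex.add_im, zero_add,
    zero_sub, neg_sq, Real.sq_sqrt hW]
  linear_combination h

end Strip

namespace Complex

lemma dist_ofReal_add (s t : ℝ) (z : ℂ) : dist (s : ℂ) (t + z) = ‖((t - s : ℝ) : ℂ) + z‖ := by
  rw [dist_comm, dist_eq_norm]
  push_cast
  ring_nf

/-- A path `0 → t + a → x + a + b` with `a`, `b` in the upper half-plane can be straightened by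
choosing the real parameter `t`. -/
lemma exists_sameRay_ofReal_add {a b : ℂ} (ha : 0 ≤ a.im) (hb : 0 ≤ b.im) (x : ℝ) :
    ∃ t : ℝ, SameRay ℝ ((t : ℂ) + a) (((x - t : ℝ) : ℂ) + b) := by
  rcases (add_nonneg ha hb).eq_or_lt with h | h
  · refine ⟨-a.re, ?_⟩
    rw [show ((-a.re : ℝ) : ℂ) + a = 0 from ext (by simp) (by simp; linarith)]
    exact SameRay.zero_left _
  · set l := (x + a.re + b.re) / (a.im + b.im)
    have hl : l * (a.im + b.im) = x + a.re + b.re := div_mul_cancel₀ _ h.ne'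
    refine ⟨l * a.im - a.re, ?_⟩
    rw [show ((l * a.im - a.re : ℝ) : ℂ) + a = a.im • (l + I) from
        ext (by simp [mul_comm]) (by simp),
      show ((x - (l * a.im - a.re) : ℝ) : ℂ) + b = b.im • (l + I) from
        ext (by simp; linarith) (by simp)]
    exact sameRay_smul_smul_of_mul_nonneg (mul_nonneg ha hb)

lemma eq_of_forall_norm_ofReal_add_le {a b : ℂ} (ha : 0 ≤ a.im) (hb : 0 ≤ b.im)
    (hab : ‖b‖ ≤ ‖a‖) (h : ∀ x : ℝ, ‖(x : ℂ) + a‖ ≤ ‖(x : ℂ) + b‖) : a = b := by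
  have hsq : ∀ {p q : ℂ}, ‖p‖ ≤ ‖q‖ → p.re ^ 2 + p.im ^ 2 ≤ q.re ^ 2 + q.im ^ 2 := fun hpq => by
    simpa only [← normSq_eq_norm_sq, normSq_apply, ← sq] using
      pow_le_pow_left₀ (norm_nonneg _) hpq 2
  have h₀ := hsq hab
  have h₁ := hsq (h 1)
  have h₂ := hsq (h (-1))
  simp only [add_re, add_im, ofReal_re, ofReal_im, zero_add] at h₁ h₂
  have hre : a.re = b.re := by nlinarith
  have him : a.im ^ 2 = b.im ^ 2 := by nlinarith
  exact ext hre ((sq_eq_sq₀ ha hb).1 him)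

end Complex

section Ray

variable {X : Type*} [MetricSpace X] {A : ℝ → ℝ → X} {z : ℝ → ℝ → ℂ}

lemma norm_strip_eq_abs_sub (hz : ∀ u v s t, dist (A u s) (A v t) = dist (s : ℂ) (t + z u v))
    (hA : ∀ u v, 0 ≤ u → 0 ≤ v → dist (A u 0) (A v 0) = |u - v|) {u v : ℝ} (hu : 0 ≤ u)
    (hv : 0 ≤ v) : ‖z u v‖ = |u - v| := by
  simpa [← hA u v hu hv] using (hz u v 0 0).symm

lemma strip_eq_add_of_le (hz_im : ∀ u v, 0 ≤ (z u v).im)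
    (hz : ∀ u v s t, dist (A u s) (A v t) = dist (s : ℂ) (t + z u v))
    (hA : ∀ u v, 0 ≤ u → 0 ≤ v → dist (A u 0) (A v 0) = |u - v|) {u v w : ℝ} (hu : 0 ≤ u)
    (huv : u ≤ v) (hvw : v ≤ w) : z u w = z u v + z v w := by
  have hnorm : ∀ {p q}, 0 ≤ p → p ≤ q → ‖z p q‖ = q - p := fun hp hpq => by
    rw [norm_strip_eq_abs_sub hz hA hp (hp.trans hpq), abs_sub_comm, abs_of_nonneg (by linarith)]
  refine Complex.eq_of_forall_norm_ofReal_add_le (hz_im u w) (add_nonneg (hz_im u v) (hz_im v w))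
    ?_ fun x => ?_
  · calc ‖z u v + z v w‖ ≤ ‖z u v‖ + ‖z v w‖ := norm_add_le _ _
      _ = ‖z u w‖ := by rw [hnorm hu huv, hnorm (hu.trans huv) hvw, hnorm hu (huv.trans hvw)]; ring
  · obtain ⟨t, ht⟩ := Complex.exists_sameRay_ofReal_add (hz_im u v) (hz_im v w) x
    calc ‖(x : ℂ) + z u w‖ = dist (A u 0) (A w x) := by
          rw [hz, Complex.dist_ofReal_add, sub_zero]
      _ ≤ dist (A u 0) (A v t) + dist (A v t) (A w x) := dist_triangle _ _ _
      _ = ‖(x : ℂ) + (z u v + z v w)‖ := by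
          rw [hz, hz, Complex.dist_ofReal_add, Complex.dist_ofReal_add, sub_zero, ← ht.norm_add]
          push_cast
          ring_nf

/-- Lines `A u` through the points `A u 0` of a geodesic ray, any two of which span a flat strip
(given by the translation `z u v` of the model plane `ℂ`), fit together into a Euclidean
half-plane. -/
lemma exists_dist_eq_dist_add_mul (hz_im : ∀ u v, 0 ≤ (z u v).im)
    (hz : ∀ u v s t, dist (A u s) (A v t) = dist (s : ℂ) (t + z u v))
    (hA : ∀ u v, 0 ≤ u → 0 ≤ v → dist (A u 0) (A v 0) = |u - v|) :
    ∃ ω : ℂ, 0 ≤ ω.im ∧ ∀ u v, 0 ≤ u → 0 ≤ v → ∀ s t : ℝ,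
      dist (A u s) (A v t) = dist ((s : ℂ) + u * ω) (t + v * ω) := by
  have hnorm : ∀ {u}, 0 ≤ u → ‖z 0 u‖ = u := fun hu => by
    rw [norm_strip_eq_abs_sub hz hA le_rfl hu, zero_sub, abs_neg, abs_of_nonneg hu]
  -- equality in the triangle inequality forces `z 0 u` and `z 0 v` onto a common ray
  have hsmul : ∀ {u v : ℝ}, 0 ≤ u → u ≤ v → (u : ℂ) * z 0 v = v * z 0 u := by
    intro u v hu huv
    have hadd := strip_eq_add_of_le hz_im hz hA le_rfl hu huv
    have hray : SameRay ℝ (z 0 u) (z u v) := by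
      rw [sameRay_iff_norm_add, ← hadd, hnorm hu, hnorm (hu.trans huv),
        norm_strip_eq_abs_sub hz hA hu (hu.trans huv), abs_sub_comm, abs_of_nonneg (by linarith)]
      ring
    have h := ((SameRay.refl (z 0 u)).add_right hray).norm_smul_eq
    rwa [← hadd, hnorm hu, hnorm (hu.trans huv), Complex.real_smul, Complex.real_smul] at h
  have hlin : ∀ {u}, 0 ≤ u → z 0 u = u * z 0 1 := fun {u} hu => by
    rcases le_total u 1 with h | h
    · simpa using (hsmul hu h).symm
    · simpa using hsmul zero_le_one h
  refine ⟨z 0 1, hz_im 0 1, fun u v hu hv s t => ?_⟩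
  wlog huv : u ≤ v generalizing u v s t
  · rw [dist_comm, this v u hv hu t s (by linarith), dist_comm]
  have hz_uv : z u v = (v - u) * z 0 1 := by
    rw [eq_sub_of_add_eq' (strip_eq_add_of_le hz_im hz hA le_rfl hu huv).symm, hlin hu,
      hlin (hu.trans huv)]
    ring
  rw [hz, hz_uv, ← dist_add_right _ _ (u * z 0 1)]
  ring_nf

end Ray

section Flat

variable {X : Type*} [MetricSpace X]

lemma exists_flat_halfPlane {A : ℝ → ℝ → X} {ω : ℂ} (hω : 0 ≤ ω.im)
    (hA : ∀ u v, 0 ≤ u → 0 ≤ v → ∀ s t : ℝ,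
      dist (A u s) (A v t) = dist ((s : ℂ) + u * ω) (t + v * ω))
    (hhalf : ∃ ψ : ℝ → ℝ → X, (∀ s t s' t' : ℝ, 0 ≤ t → 0 ≤ t' →
        dist (ψ s t) (ψ s' t') = √((s - s') ^ 2 + (t - t') ^ 2)) ∧ ∀ s, ψ s 0 = A 0 s) :
    ∃ Ψ : ℂ → X, (∀ p q : ℂ, 0 ≤ p.im → 0 ≤ q.im → dist (Ψ p) (Ψ q) = dist p q) ∧
      ∀ u, 0 ≤ u → A u 0 = Ψ (u * ω) := by
  rcases hω.eq_or_lt with h | h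
  · -- the axes all coincide with `A 0`, which bounds a flat half-plane
    obtain ⟨ψ, hψ, hψ0⟩ := hhalf
    refine ⟨fun p => ψ p.re p.im, fun p q hp hq => by rw [hψ _ _ _ _ hp hq, Complex.dist_eq_re_im],
      fun u hu => ?_⟩
    have hu0 : dist (A 0 (u * ω.re)) (A u 0) = 0 := by
      rw [hA 0 u le_rfl hu, Complex.dist_eq_re_im]
      simp [← h]
    rw [← dist_eq_zero.1 hu0, ← hψ0]
    simp [← h]
  · refine ⟨fun p => A (p.im / ω.im) (p.re - p.im / ω.im * ω.re), fun p q hp hq => ?_,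
      fun u hu => ?_⟩
    · rw [hA _ _ (div_nonneg hp h.le) (div_nonneg hq h.le)]
      congr 1 <;> apply Complex.ext <;> simp [h.ne']
    · simp [h.ne']

lemma exists_flat_quadrant {Ψ : ℂ → X}
    (hΨ : ∀ p q : ℂ, 0 ≤ p.im → 0 ≤ q.im → dist (Ψ p) (Ψ q) = dist p q) {ω : ℂ} (hω : 0 ≤ ω.im) :
    ∃ φ : ℝ → ℝ → X, (∀ s t s' t' : ℝ, 0 ≤ s → 0 ≤ t → 0 ≤ s' → 0 ≤ t' →
        dist (φ s t) (φ s' t') = √((s - s') ^ 2 + (t - t') ^ 2)) ∧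
      ∀ u : ℝ, 0 ≤ u → ∃ s t : ℝ, 0 ≤ s ∧ 0 ≤ t ∧ Ψ (u * ω) = φ s t := by
  rcases le_total 0 ω.re with h | h
  · refine ⟨fun s t => Ψ ⟨s, t⟩, fun s t s' t' _ ht _ ht' => ?_,
      fun u hu => ⟨u * ω.re, u * ω.im, by positivity, by positivity, ?_⟩⟩
    · rw [hΨ _ _ ht ht', Complex.dist_eq_re_im]
    · congr 1; apply Complex.ext <;> simp
  · refine ⟨fun s t => Ψ ⟨-s, t⟩, fun s t s' t' _ ht _ ht' => ?_,
      fun u hu => ⟨-(u * ω.re), u * ω.im, by nlinarith, by positivity, ?_⟩⟩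
    · rw [hΨ _ _ ht ht', Complex.dist_eq_re_im]
      ring_nf
    · congr 1; apply Complex.ext <;> simp

end Flat

theorem ray_in_minSet_in_flat_quadrant_general {X : Type*} [MetricSpace X] (hX : IsCAT0 X)
    (f : X → X) (hiso : Isometry f) (hsurj : Function.Surjective f)
    (τ : ℝ) (hτ : τ = ⨅ x : X, dist (f x) x) (hpos : 0 < τ)
    (hnotrankone : ∀ c : ℝ → X, Isometry c → (∀ t : ℝ, f (c t) = c (t + τ)) →
      ∃ φ : ℝ → ℝ → X, (∀ s t s' t' : ℝ, 0 ≤ t → 0 ≤ t' →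
        dist (φ s t) (φ s' t') = Real.sqrt ((s - s') ^ 2 + (t - t') ^ 2)) ∧
        ∀ s : ℝ, φ s 0 = c s)
    (γ : ℝ≥0 → X) (hγ : Isometry γ)
    (hγmin : ∀ t : ℝ≥0, dist (f (γ t)) (γ t) = τ) :
    ∃ φ : ℝ → ℝ → X,
      (∀ s t s' t' : ℝ, 0 ≤ s → 0 ≤ t → 0 ≤ s' → 0 ≤ t' →
        dist (φ s t) (φ s' t') = Real.sqrt ((s - s') ^ 2 + (t - t') ^ 2)) ∧
      ∀ u : ℝ≥0, ∃ s t : ℝ, 0 ≤ s ∧ 0 ≤ t ∧ γ u = φ s t := by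
  have hlow : ∀ x, τ ≤ dist (f x) x := fun x =>
    hτ ▸ ciInf_le ⟨0, Set.forall_mem_range.2 fun _ => dist_nonneg⟩ x
  let e : X ≃ᵢ X := IsometryEquiv.mk' f (Function.surjInv hsurj) (Function.surjInv_eq hsurj) hiso
  choose A hA hAγ using fun u : ℝ => hX.exists_axis e hpos hlow (hγmin u.toNNReal)
  choose z hz_im hz using fun u v => (hA u).exists_strip hX hiso hpos (hA v)
  have hA0 : ∀ u v, 0 ≤ u → 0 ≤ v → dist (A u 0) (A v 0) = |u - v| := fun u v hu hv => by
    rw [hAγ, hAγ, hγ.dist_eq, NNReal.dist_eq, Real.coe_toNNReal u hu, Real.coe_toNNReal v hv]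
  obtain ⟨ω, hω, hAω⟩ := exists_dist_eq_dist_add_mul hz_im hz hA0
  obtain ⟨Ψ, hΨ, hΨω⟩ := exists_flat_halfPlane hω hAω (hnotrankone (A 0) (hA 0).1 (hA 0).2)
  obtain ⟨φ, hφ, hφω⟩ := exists_flat_quadrant hΨ hω
  refine ⟨φ, hφ, fun u => ?_⟩
  obtain ⟨s, t, hs, ht, h⟩ := hφω u u.2
  exact ⟨s, t, hs, ht, by rw [← h, ← hΨω u u.2, hAγ, Real.toNNReal_coe]⟩

/-- **Geodesic rays in `Min(f)` of a non-rank-one hyperbolic isometry lie in flat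
quadrants.** If `f` is a hyperbolic isometry of a proper CAT(0) space that is not
rank-one (every axis bounds a flat half-plane) and `γ` is a geodesic ray contained in
`Min(f)`, then `γ` is contained in an isometrically embedded Euclidean quadrant. -/
theorem ray_in_minSet_in_flat_quadrant {X : Type*} [Nonempty X] [MetricSpace X]
    [ProperSpace X] (hX : IsCAT0 X)
    (f : X → X) (hiso : Isometry f) (hsurj : Function.Surjective f)
    (τ : ℝ) (hτ : τ = ⨅ x : X, dist (f x) x) (hpos : 0 < τ)
    (hattained : ∃ x : X, dist (f x) x = τ)
    (hnotrankone : ∀ c : ℝ → X, Isometry c → (∀ t : ℝ, f (c t) = c (t + τ)) →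
      ∃ φ : ℝ → ℝ → X, (∀ s t s' t' : ℝ, 0 ≤ t → 0 ≤ t' →
        dist (φ s t) (φ s' t') = Real.sqrt ((s - s') ^ 2 + (t - t') ^ 2)) ∧
        ∀ s : ℝ, φ s 0 = c s)
    (γ : ℝ≥0 → X) (hγ : Isometry γ)
    (hγmin : ∀ t : ℝ≥0, dist (f (γ t)) (γ t) = τ) :
    ∃ φ : ℝ → ℝ → X,
      (∀ s t s' t' : ℝ, 0 ≤ s → 0 ≤ t → 0 ≤ s' → 0 ≤ t' →
        dist (φ s t) (φ s' t') = Real.sqrt ((s - s') ^ 2 + (t - t') ^ 2)) ∧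
      ∀ u : ℝ≥0, ∃ s t : ℝ, 0 ≤ s ∧ 0 ≤ t ∧ γ u = φ s t :=
  ray_in_minSet_in_flat_quadrant_general hX f hiso hsurj τ hτ hpos hnotrankone γ hγ hγmin
end
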